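/- The generalized Schur complement satisfies the uniform two-sided bounds ⟨C w, w⟩ ≤ ⟨S w, w⟩ ≤ ⟨C w, w⟩ + (1/α)‖Bᵀw‖² for all w ∈ ℝ^n, where S w = B x(w) + C w and x(w) is the unique element of 𝒲 with ⟨A x(w), v⟩ = ⟨Bᵀw, v⟩ for all v ∈ 𝒲. In particular, these bounds hold uniformly over all linear subspaces 𝒲 ⊆ ℝ^m. -/

import Mathlib

open scoped RealInnerProductSpace

/-!
Writing `g = Bᵀw` and `u = x(w)`, testing the Galerkin equation with `v = u` gives
`⟨B u, w⟩ = ⟨g, u⟩ = ⟨A u, u⟩ ≥ α‖u‖² ≥ 0`, which is the lower bound. Combining the same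
inequality with Cauchy–Schwarz yields `α‖u‖ ≤ ‖g‖`, hence `⟨g, u⟩ ≤ ‖g‖‖u‖ ≤ ‖g‖²/α`.
No property of `𝒲` beyond `u ∈ 𝒲` enters, so the bounds are uniform in `𝒲`.
-/

theorem inner_le_norm_sq_div_of_mul_norm_sq_le_inner {E : Type*} [NormedAddCommGroup E]
    [InnerProductSpace ℝ E] {α : ℝ} (hα : 0 < α) {g u : E} (h : α * ‖u‖ ^ 2 ≤ ⟪g, u⟫) :
    ⟪g, u⟫ ≤ ‖g‖ ^ 2 / α := by
  have hcs : ⟪g, u⟫ ≤ ‖g‖ * ‖u‖ := real_inner_le_norm g u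
  have hu : α * ‖u‖ ≤ ‖g‖ := by
    rcases (norm_nonneg u).eq_or_lt with hu0 | hu0
    · rw [← hu0, mul_zero]
      exact norm_nonneg g
    · nlinarith
  rw [le_div_iff₀ hα]
  nlinarith [norm_nonneg g]

theorem stmt_10 {m n : ℕ}
    (A : EuclideanSpace ℝ (Fin m) →L[ℝ] EuclideanSpace ℝ (Fin m))
    (α : ℝ) (hα : 0 < α)
    (hAcoer : ∀ V : EuclideanSpace ℝ (Fin m), α * ‖V‖ ^ 2 ≤ ⟪A V, V⟫)
    (B : EuclideanSpace ℝ (Fin m) →L[ℝ] EuclideanSpace ℝ (Fin n))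
    (C : EuclideanSpace ℝ (Fin n) →L[ℝ] EuclideanSpace ℝ (Fin n)) :
    ∀ (𝒲 : Submodule ℝ (EuclideanSpace ℝ (Fin m)))
      (x : EuclideanSpace ℝ (Fin n) → EuclideanSpace ℝ (Fin m)),
      (∀ w : EuclideanSpace ℝ (Fin n), x w ∈ 𝒲 ∧
        ∀ v ∈ 𝒲, ⟪A (x w), v⟫ = ⟪(ContinuousLinearMap.adjoint B) w, v⟫) →
      ∀ w : EuclideanSpace ℝ (Fin n),
        ⟪C w, w⟫ ≤ ⟪B (x w) + C w, w⟫ ∧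
        ⟪B (x w) + C w, w⟫ ≤ ⟪C w, w⟫ + (1 / α) * ‖(ContinuousLinearMap.adjoint B) w‖ ^ 2 := by
  intro 𝒲 x hx w
  obtain ⟨hmem, hgalerkin⟩ := hx w
  have hcoer : α * ‖x w‖ ^ 2 ≤ ⟪(ContinuousLinearMap.adjoint B) w, x w⟫ :=
    hgalerkin (x w) hmem ▸ hAcoer (x w)
  have hBx : ⟪B (x w), w⟫ = ⟪(ContinuousLinearMap.adjoint B) w, x w⟫ := by
    rw [ContinuousLinearMap.adjoint_inner_left, real_inner_comm]
  have lower : 0 ≤ ⟪(ContinuousLinearMap.adjoint B) w, x w⟫ := by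
    have : 0 ≤ α * ‖x w‖ ^ 2 := by positivity
    linarith
  have upper := inner_le_norm_sq_div_of_mul_norm_sq_le_inner hα hcoer
  rw [inner_add_left, hBx, one_div_mul_eq_div]
  constructor <;> linarith
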